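/- For n ≥ 1, the map sending w = w_1···w_{2n} ∈ A_{2n}(4312) to the permutation τ = (2n+1-w_1)(2n+1)(2n+1-w_2)···(2n+1-w_{2n}) is a bijection from A_{2n}(4312) onto the set of u ∈ A_{2n+1}(1243) with u_2 = 2n+1 and u_1 > u_3. -/

import Mathlib

/-- `u` is a permutation of `{1,...,m}`, given as the word `u 0, u 1, ..., u (m-1)`. -/
def IsPermOn (m : ℕ) (u : Fin m → ℕ) : Prop :=
  Function.Injective u ∧ ∀ i, u i ∈ Finset.Icc 1 m

/-- up-down (alternating): u 0 < u 1 > u 2 < u 3 > ... -/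
def UpDown (m : ℕ) (u : Fin m → ℕ) : Prop :=
  ∀ i : ℕ, ∀ h : i + 1 < m,
    (i % 2 = 0 → u ⟨i, by omega⟩ < u ⟨i + 1, h⟩) ∧
    (i % 2 = 1 → u ⟨i + 1, h⟩ < u ⟨i, by omega⟩)

/-- down-up: u 0 > u 1 < u 2 > u 3 < ... -/
def DownUp (m : ℕ) (u : Fin m → ℕ) : Prop :=
  ∀ i : ℕ, ∀ h : i + 1 < m,
    (i % 2 = 0 → u ⟨i + 1, h⟩ < u ⟨i, by omega⟩) ∧
    (i % 2 = 1 → u ⟨i, by omega⟩ < u ⟨i + 1, h⟩)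

/-- `u` contains the pattern `σ`. -/
def Contains {m k : ℕ} (u : Fin m → ℕ) (σ : Fin k → ℕ) : Prop :=
  ∃ g : Fin k → Fin m, StrictMono g ∧ ∀ a b : Fin k, u (g a) < u (g b) ↔ σ a < σ b

def Avoids {m k : ℕ} (u : Fin m → ℕ) (σ : Fin k → ℕ) : Prop := ¬ Contains u σ

/-- The set `A_m(σ)` of σ-avoiding up-down alternating permutations of `{1,...,m}`. -/
def AvoidSet (m : ℕ) {k : ℕ} (σ : Fin k → ℕ) : Set (Fin m → ℕ) :=
  {u | IsPermOn m u ∧ UpDown m u ∧ Avoids u σ}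

def p1234 : Fin 4 → ℕ := ![1, 2, 3, 4]
def p1243 : Fin 4 → ℕ := ![1, 2, 4, 3]
def p2143 : Fin 4 → ℕ := ![2, 1, 4, 3]
def p4312 : Fin 4 → ℕ := ![4, 3, 1, 2]
def p3412 : Fin 4 → ℕ := ![3, 4, 1, 2]

/-- `f(u)`: max over 0 and the smaller entries of 21-patterns of `u`. -/
noncomputable def fval {m : ℕ} (u : Fin m → ℕ) : ℕ :=
  sSup ({0} ∪ {x | ∃ i j : Fin m, i < j ∧ u j < u i ∧ x = u j})

/-- `e(u)`: max over 0 and the smallest entries of 132-patterns of `u`. -/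
noncomputable def eval' {m : ℕ} (u : Fin m → ℕ) : ℕ :=
  sSup ({0} ∪ {x | ∃ i j k : Fin m, i < j ∧ j < k ∧ u i < u k ∧ u k < u j ∧ x = u i})

/-- `g(u)`: min over m+1 and the largest entries of 312-patterns of `u`. -/
noncomputable def gval {m : ℕ} (u : Fin m → ℕ) : ℕ :=
  sInf ({m + 1} ∪ {x | ∃ i j k : Fin m, i < j ∧ j < k ∧ u j < u k ∧ u k < u i ∧ x = u i})

/-- `h(u)`: min over m+1 and the larger entries of 12-patterns of `u`. -/
noncomputable def hval {m : ℕ} (u : Fin m → ℕ) : ℕ :=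
  sInf ({m + 1} ∪ {x | ∃ i j : Fin m, i < j ∧ u i < u j ∧ x = u j})

/-- the operation `v ↦ u`: prepend `v`, increasing every entry `≥ v` by 1. -/
def ins {m : ℕ} (v : ℕ) (u : Fin m → ℕ) : Fin (m + 1) → ℕ :=
  Fin.cases v (fun j => if u j < v then u j else u j + 1)

/-- standardization of a word with distinct entries. -/
def stWord {k : ℕ} (r : Fin k → ℕ) : Fin k → ℕ :=
  fun j => (Finset.univ.filter (fun i => r i ≤ r j)).card

/-!
Complementing values, `w ↦ 2n+1-w`, turns up-down permutations into down-up ones and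
4312-occurrences into 1243-occurrences. Inserting the new maximum `2n+1` in second position
into a down-up permutation of length `2n ≥ 2` yields exactly the up-down permutations of length
`2n+1` with `2n+1` in second position and `u_1 > u_3`. This insertion creates no 1243: the
maximum could only play the role of the `4`, which needs two entries to its left.
-/

def complement (m : ℕ) (w : Fin m → ℕ) : Fin m → ℕ := fun j => m + 1 - w j

section Complement

variable {m : ℕ} {w : Fin m → ℕ}

lemma IsPermOn.le (hw : IsPermOn m w) (j : Fin m) : w j ≤ m :=
  (Finset.mem_Icc.1 (hw.2 j)).2

lemma complement_lt_complement_iff (hw : ∀ j, w j ≤ m + 1) (i j : Fin m) :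
    complement m w i < complement m w j ↔ w j < w i := by
  have := hw i; have := hw j; simp only [complement]; omega

lemma complement_complement (hw : ∀ j, w j ≤ m + 1) : complement m (complement m w) = w := by
  funext j; have := hw j; simp only [complement]; omega

lemma IsPermOn.complement (hw : IsPermOn m w) : IsPermOn m (complement m w) := by
  refine ⟨fun i j hij => hw.1 ?_, fun j => ?_⟩
  · have := hw.le i; have := hw.le j; simp only [_root_.complement] at hij; omega
  · have := Finset.mem_Icc.1 (hw.2 j); simp only [_root_.complement, Finset.mem_Icc]; omega

lemma downUp_complement_iff (hw : ∀ j, w j ≤ m + 1) :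
    DownUp m (complement m w) ↔ UpDown m w := by
  simp only [DownUp, UpDown, complement_lt_complement_iff hw]

lemma contains_complement_iff {k : ℕ} {σ τ : Fin k → ℕ} (hw : ∀ j, w j ≤ m + 1)
    (hστ : ∀ a b, σ a < σ b ↔ τ b < τ a) :
    Contains (complement m w) σ ↔ Contains w τ := by
  simp only [Contains, complement_lt_complement_iff hw, hστ]
  exact exists_congr fun g => and_congr_right fun _ => forall_comm

theorem bijOn_complement {k : ℕ} {σ τ : Fin k → ℕ}
    (hστ : ∀ a b, σ a < σ b ↔ τ b < τ a) :
    Set.BijOn (complement m) (AvoidSet m τ) {v | IsPermOn m v ∧ DownUp m v ∧ Avoids v σ} := by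
  have bound : ∀ {v : Fin m → ℕ}, IsPermOn m v → ∀ j, v j ≤ m + 1 :=
    fun hv j => Nat.le_succ_of_le (hv.le j)
  refine Set.InvOn.bijOn ⟨fun w hw => complement_complement (bound hw.1),
    fun v hv => complement_complement (bound hv.1)⟩ ?_ ?_
  · rintro w ⟨hperm, hud, havoid⟩
    exact ⟨hperm.complement, (downUp_complement_iff (bound hperm)).2 hud,
      fun hc => havoid ((contains_complement_iff (bound hperm) hστ).1 hc)⟩
  · rintro v ⟨hperm, hdu, havoid⟩
    have hv := complement_complement (bound hperm)
    refine ⟨hperm.complement, ?_, fun hc => havoid ?_⟩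
    · rwa [← downUp_complement_iff (bound hperm.complement), hv]
    · rwa [← hv, contains_complement_iff (bound hperm.complement) hστ]

end Complement

section Insertion

variable {m : ℕ} {v : Fin m → ℕ} {x : ℕ}

lemma Fin.val_le_val_of_strictMono {k : ℕ} {g : Fin k → Fin m} (hg : StrictMono g) (a : Fin k) :
    (a : ℕ) ≤ g a := by
  obtain ⟨a, ha⟩ := a
  induction a with
  | zero => exact Nat.zero_le _
  | succ a ih =>
    exact (ih (by omega)).trans_lt (hg (show (⟨a, by omega⟩ : Fin k) < ⟨a + 1, ha⟩ from
      Nat.lt_succ_self a))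

lemma Fin.injective_insertNth_iff {α : Type*} (p : Fin (m + 1)) (y : α) (f : Fin m → α) :
    Function.Injective (p.insertNth y f) ↔ y ∉ Set.range f ∧ Function.Injective f := by
  rw [← Fin.cons_comp_cycleRange, Function.Injective.of_comp_iff' _ p.cycleRange.bijective,
    Fin.cons_injective_iff]

lemma isPermOn_insertNth_iff (p : Fin (m + 1)) :
    IsPermOn (m + 1) (p.insertNth (m + 1) v) ↔ IsPermOn m v := by
  simp only [IsPermOn, Fin.injective_insertNth_iff, p.forall_iff_succAbove,
    Fin.insertNth_apply_same, Fin.insertNth_apply_succAbove, Set.mem_range, not_exists,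
    Finset.mem_Icc]
  constructor
  · rintro ⟨⟨hne, hinj⟩, -, hval⟩
    exact ⟨hinj, fun j => ⟨(hval j).1, by have := hval j; have := hne j; omega⟩⟩
  · rintro ⟨hinj, hval⟩
    exact ⟨⟨fun j => by have := hval j; omega, hinj⟩, by omega,
      fun j => ⟨(hval j).1, by have := hval j; omega⟩⟩

lemma contains_insertNth_iff {k : ℕ} {σ : Fin k → ℕ} (p : Fin (m + 1)) (hx : ∀ j, v j < x)
    (hσ : ∀ a, (∀ b, b ≠ a → σ b < σ a) → (p : ℕ) < a) :
    Contains (p.insertNth x v) σ ↔ Contains v σ := by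
  constructor
  · rintro ⟨g, hg, hpat⟩
    have hgp : ∀ a, g a ≠ p := by
      intro a hga
      refine (hσ a fun b hb => ?_).not_ge (hga ▸ Fin.val_le_val_of_strictMono hg a)
      obtain ⟨z, hz⟩ := Fin.exists_succAbove_eq (hga ▸ hg.injective.ne hb)
      rw [← hpat, hga, ← hz, Fin.insertNth_apply_succAbove, Fin.insertNth_apply_same]
      exact hx z
    choose z hz using fun a => Fin.exists_succAbove_eq (hgp a)
    refine ⟨z, fun a b hab => (Fin.strictMono_succAbove p).lt_iff_lt.1 ?_, fun a b => ?_⟩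
    · rw [hz, hz]; exact hg hab
    · rw [← hpat, ← hz, ← hz, Fin.insertNth_apply_succAbove, Fin.insertNth_apply_succAbove]
  · rintro ⟨g, hg, hpat⟩
    exact ⟨p.succAbove ∘ g, (Fin.strictMono_succAbove p).comp hg, by simpa using hpat⟩

lemma insertNth_one_apply (h : 0 < m) (x : ℕ) (v : Fin m → ℕ) (i : Fin (m + 1)) :
    (Fin.insertNth ⟨1, by omega⟩ x v : Fin (m + 1) → ℕ) i =
      if (i : ℕ) = 0 then v ⟨0, h⟩
      else if (i : ℕ) = 1 then x
      else v ⟨i - 1, by omega⟩ := by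
  obtain ⟨_ | _ | i, hi⟩ := i
  · exact Fin.insertNth_apply_succAbove _ _ _ ⟨0, h⟩
  · exact Fin.insertNth_apply_same _ _ _
  · exact Fin.insertNth_apply_succAbove _ _ _ ⟨i + 1, by omega⟩

lemma upDown_iff_downUp_of_eq_insertNth_one (h : 2 ≤ m) (hx : ∀ j, v j < x)
    {u : Fin (m + 1) → ℕ} (hu : u = Fin.insertNth ⟨1, by omega⟩ x v) :
    UpDown (m + 1) u ∧ u ⟨2, by omega⟩ < u ⟨0, by omega⟩ ↔ DownUp m v := by
  have u0 : u ⟨0, by omega⟩ = v ⟨0, by omega⟩ := by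
    rw [hu]; exact Fin.insertNth_apply_succAbove (α := fun _ => ℕ) _ x v ⟨0, by omega⟩
  have u1 : u ⟨1, by omega⟩ = x := by
    rw [hu]; exact Fin.insertNth_apply_same (α := fun _ => ℕ) _ x v
  have u2 (j : ℕ) (hj : j + 2 < m + 1) : u ⟨j + 2, hj⟩ = v ⟨j + 1, by omega⟩ := by
    rw [hu]; exact Fin.insertNth_apply_succAbove (α := fun _ => ℕ) _ x v ⟨j + 1, by omega⟩
  constructor
  · rintro ⟨hud, h20⟩ i hi
    rcases i with _ | i
    · rw [u2 0, u0] at h20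
      exact ⟨fun _ => h20, by omega⟩
    · have := hud (i + 2) (by omega)
      rw [u2 i, u2 (i + 1)] at this
      exact ⟨fun hp => this.2 (by omega), fun hp => this.1 (by omega)⟩
  · intro hdu
    refine ⟨fun i hi => ?_, ?_⟩
    · rcases i with _ | _ | i
      · rw [u0, u1]; exact ⟨fun _ => hx _, by omega⟩
      · rw [u1, u2 0]; exact ⟨by omega, fun _ => hx _⟩
      · rw [u2 i, u2 (i + 1)]
        have := hdu (i + 1) (by omega)
        exact ⟨fun hp => this.2 (by omega), fun hp => this.1 (by omega)⟩
    · rw [u2 0, u0]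
      exact (hdu 0 (by omega)).1 rfl

theorem bijOn_insertNth_one {k : ℕ} {σ : Fin k → ℕ} (h : 2 ≤ m)
    (hσ : ∀ a, (∀ b, b ≠ a → σ b < σ a) → 1 < (a : ℕ)) :
    Set.BijOn (fun v => (Fin.insertNth ⟨1, by omega⟩ (m + 1) v : Fin (m + 1) → ℕ))
      {v | IsPermOn m v ∧ DownUp m v ∧ Avoids v σ}
      {u | u ∈ AvoidSet (m + 1) σ ∧ u ⟨1, by omega⟩ = m + 1 ∧
        u ⟨2, by omega⟩ < u ⟨0, by omega⟩} := by
  set p : Fin (m + 1) := ⟨1, by omega⟩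
  have hx : ∀ {v : Fin m → ℕ}, IsPermOn m v → ∀ j, v j < m + 1 :=
    fun hv j => Nat.lt_succ_of_le (hv.le j)
  refine Set.InvOn.bijOn (f' := p.removeNth)
    ⟨fun v _ => Fin.removeNth_insertNth (α := fun _ => ℕ) p _ v, fun u hu => ?_⟩ ?_ ?_
  · have := Fin.insertNth_self_removeNth p u
    rwa [hu.2.1] at this
  · rintro v ⟨hperm, hdu, havoid⟩
    obtain ⟨hud, h20⟩ := (upDown_iff_downUp_of_eq_insertNth_one h (hx hperm) rfl).2 hdu
    exact ⟨⟨(isPermOn_insertNth_iff p).2 hperm, hud,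
      fun hc => havoid ((contains_insertNth_iff p (hx hperm) hσ).1 hc)⟩,
      Fin.insertNth_apply_same _ _ _, h20⟩
  · rintro u ⟨⟨hperm, hud, havoid⟩, hu1, h20⟩
    have hu : u = p.insertNth (m + 1) (p.removeNth u) := by
      have := Fin.insertNth_self_removeNth p u
      rw [hu1] at this
      exact this.symm
    rw [hu, isPermOn_insertNth_iff] at hperm
    refine ⟨hperm, (upDown_iff_downUp_of_eq_insertNth_one h (hx hperm) hu).1 ⟨hud, h20⟩,
      fun hc => havoid ?_⟩
    rwa [hu, contains_insertNth_iff p (hx hperm) hσ]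

end Insertion

theorem stmt8 (n : ℕ) (hn : 1 ≤ n) :
    Set.BijOn
      (fun (w : Fin (2 * n) → ℕ) => fun (i : Fin (2 * n + 1)) =>
        if (i : ℕ) = 0 then 2 * n + 1 - w ⟨0, by omega⟩
        else if (i : ℕ) = 1 then 2 * n + 1
        else 2 * n + 1 - w ⟨(i : ℕ) - 1, by have := i.isLt; omega⟩)
      (AvoidSet (2 * n) p4312)
      {u | u ∈ AvoidSet (2 * n + 1) p1243 ∧ u ⟨1, by omega⟩ = 2 * n + 1 ∧
        u ⟨2, by omega⟩ < u ⟨0, by omega⟩} := by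
  exact ((bijOn_insertNth_one (by omega) (by decide)).comp (bijOn_complement (by decide))).congr
    fun w _ => funext fun i => insertNth_one_apply (by omega) _ _ i
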